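/- arXiv:2304.02567 — 2 statements merged into one kernel-verified Lean document; each statement's English description precedes it below -/
import Mathlib

section
/- The sequence of binomial coefficients satisfies: for fixed p ∈ (0,1) with pn an integer, C(n, pn) = exp(n·H(p)) / √(2π·p·(1-p)·n) · (1 + O(1/n)) as n → ∞. More precisely, for every p ∈ (0,1) and n with pn ∈ ℕ: 1 - (1 - p(1-p))/(12·p·(1-p)·n) < C(n,pn) / ( exp(n·H(p)) / √(2π·p·(1-p)·n) ) < 1. -/
open Real Filter Topology Stirling

/-! With the Stirling sequence `s j = j! / (√(2j) (j/e)^j)` and `m = n - k`, the ratio of `C(n,k)`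
to `e^{nH(p)} / √(2π p (1-p) n)` is exactly `√π s_n / (s_k s_m)`. Robbins' bounds
`√π e^{1/(12j+1)} ≤ s_j ≤ √π e^{1/(12j)}` then give the upper bound, since `s_n < s_k` and
`√π ≤ s_m`, and bound the ratio below by `exp (1/(12n+1) - 1/(12k) - 1/(12m))`. A third-order
expansion of `exp` compares this with `1 + 1/(12n) - 1/(12k) - 1/(12m)`, which is the claimed lower
bound written in terms of `k` and `m`. -/

lemma le_add_of_tendsto_of_sub_succ_le {f g : ℕ → ℝ} {L : ℝ} (hf : Tendsto f atTop (𝓝 L))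
    (hg : Tendsto g atTop (𝓝 0)) (h : ∀ j, f j - f (j + 1) ≤ g j - g (j + 1)) (n : ℕ) :
    f n ≤ L + g n := by
  have hmono : Monotone fun j => f j - g j := monotone_nat_of_le_succ fun j => by linarith [h j]
  linarith [hmono.ge_of_tendsto (by simpa using hf.sub hg) n]

lemma add_le_of_tendsto_of_sub_succ_le {f g : ℕ → ℝ} {L : ℝ} (hf : Tendsto f atTop (𝓝 L))
    (hg : Tendsto g atTop (𝓝 0)) (h : ∀ j, g j - g (j + 1) ≤ f j - f (j + 1)) (n : ℕ) :
    L + g n ≤ f n := by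
  have hanti : Antitone fun j => f j - g j := antitone_nat_of_succ_le fun j => by linarith [h j]
  linarith [hanti.le_of_tendsto (by simpa using hf.sub hg) n]

lemma tendsto_one_div_mul_succ_add (a c : ℝ) (ha : 0 < a) :
    Tendsto (fun j : ℕ => 1 / (a * (j + 1) + c)) atTop (𝓝 0) :=
  tendsto_const_nhds.div_atTop <| tendsto_atTop_add_const_right _ c <|
    (tendsto_natCast_atTop_atTop.atTop_add tendsto_const_nhds).const_mul_atTop ha

lemma one_add_add_sq_div_two_sub_le_exp {x : ℝ} (hx : |x| ≤ 1) :
    1 + x + x ^ 2 / 2 - 2 / 9 * |x| ^ 3 ≤ exp x := by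
  have h := abs_le.1 (Real.exp_bound hx (n := 3) (by norm_num))
  norm_num [Finset.sum_range_succ, Nat.factorial] at h
  linarith [h.1]

lemma one_add_div_sub_div_sub_div_lt_exp {k m : ℝ} (hk : 1 ≤ k) (hm : 1 ≤ m) :
    1 + 1 / (12 * (k + m)) - 1 / (12 * k) - 1 / (12 * m) <
      exp (1 / (12 * (k + m) + 1) - 1 / (12 * k) - 1 / (12 * m)) := by
  set n := k + m with hn
  set u := 1 / (12 * k) + 1 / (12 * m) with hu
  set y := u - 1 / (12 * n + 1)
  have hu_le : u ≤ 1 / 6 := by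
    have : 1 / (12 * k) ≤ 1 / 12 := by gcongr; linarith
    have : 1 / (12 * m) ≤ 1 / 12 := by gcongr; linarith
    linarith
  -- `1/k + 1/m ≥ 4/(k+m)`
  have hu_ge : 1 / (3 * n) ≤ u := by
    rw [hu, hn, div_add_div _ _ (by positivity) (by positivity),
      div_le_div_iff₀ (by positivity) (by positivity)]
    nlinarith [sq_nonneg (k - m)]
  have hy_ge : 1 / (4 * n) ≤ y := by
    have : 1 / (12 * n + 1) ≤ 1 / (12 * n) := by gcongr; linarith
    have : 1 / (3 * n) - 1 / (12 * n) = 1 / (4 * n) := by field_simp; ring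
    linarith
  have hy_pos : 0 < y := lt_of_lt_of_le (by positivity) hy_ge
  have hy_le : y ≤ 1 / 6 := by
    have : 0 < 1 / (12 * n + 1) := by positivity
    linarith
  have hgap : 1 / (12 * n) - 1 / (12 * n + 1) < y ^ 2 / 9 := by
    have hny : 1 ≤ 4 * n * y := by rwa [div_le_iff₀' (by positivity)] at hy_ge
    rw [div_sub_div _ _ (by positivity) (by positivity),
      div_lt_div_iff₀ (by positivity) (by positivity)]
    nlinarith [mul_le_mul hny hny zero_le_one (by positivity)]
  have hexp := one_add_add_sq_div_two_sub_le_exp (x := -y)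
    (by rw [abs_neg, abs_of_pos hy_pos]; linarith)
  rw [abs_neg, abs_of_pos hy_pos] at hexp
  have hcube : y ^ 3 ≤ y ^ 2 / 6 := by nlinarith [sq_nonneg y]
  have : 1 / (12 * n + 1) - 1 / (12 * k) - 1 / (12 * m) = -y := by ring
  rw [this]
  nlinarith

lemma exp_mul_binEntropy_div {k m : ℕ} (hk : k ≠ 0) (hm : m ≠ 0) :
    exp ((k + m : ℝ) * binEntropy (k / (k + m))) = (k + m : ℝ) ^ (k + m) / (k ^ k * m ^ m) := by
  have hk' : (0 : ℝ) < k := by positivity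
  have hm' : (0 : ℝ) < m := by positivity
  have hsplit : (k + m : ℝ) * binEntropy (k / (k + m)) =
      k * log ((k + m) / k) + m * log ((k + m) / m) := by
    have : 1 - (k : ℝ) / (k + m) = m / (k + m) := by field_simp; ring
    rw [binEntropy, this, inv_div, inv_div]
    field_simp
  rw [hsplit, exp_add, exp_nat_mul, exp_nat_mul, exp_log (by positivity), exp_log (by positivity),
    div_pow, div_pow, pow_add]
  field_simp

namespace Stirling

lemma stirlingSeq_pos {n : ℕ} (hn : n ≠ 0) : 0 < stirlingSeq n := by
  unfold stirlingSeq; positivity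

lemma factorial_eq_stirlingSeq_mul {n : ℕ} (hn : n ≠ 0) :
    (n.factorial : ℝ) = stirlingSeq n * (√(2 * n) * (n / exp 1) ^ n) := by
  rw [stirlingSeq, div_mul_cancel₀ _ (by positivity)]

lemma tendsto_log_stirlingSeq_succ :
    Tendsto (fun j : ℕ => log (stirlingSeq (j + 1))) atTop (𝓝 (log √π)) :=
  (continuousAt_log (by positivity)).tendsto.comp
    (tendsto_stirlingSeq_sqrt_pi.comp (tendsto_add_atTop_nat 1))

lemma one_div_three_mul_sq_le_log_stirlingSeq_sdiff (n : ℕ) :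
    1 / (3 * (2 * ((n : ℝ) + 1) + 1) ^ 2) ≤
      log (stirlingSeq (n + 1)) - log (stirlingSeq (n + 2)) := by
  refine Eq.trans_le ?_ (le_hasSum (log_stirlingSeq_sdiff_hasSum n) 0 fun j _ => by positivity)
  push_cast
  field_simp
  ring

theorem stirlingSeq_le_sqrt_pi_mul_exp {n : ℕ} (hn : n ≠ 0) :
    stirlingSeq n ≤ √π * exp (1 / (12 * n)) := by
  obtain ⟨j, rfl⟩ := Nat.exists_eq_succ_of_ne_zero hn
  have hlog : log (stirlingSeq (j + 1)) ≤ log √π + 1 / (12 * ((j : ℝ) + 1)) := by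
    refine le_add_of_tendsto_of_sub_succ_le tendsto_log_stirlingSeq_succ
      (by simpa only [add_zero] using tendsto_one_div_mul_succ_add 12 0 (by norm_num))
      (fun i => ?_) j
    calc _ ≤ 1 / (12 * ((i + 1 : ℕ) : ℝ) * ((i + 1 : ℕ) + 1)) := log_stirlingSeq_sdiff_le (i + 1)
      _ = _ := by push_cast; field_simp; ring
  rw [← exp_log (stirlingSeq_pos hn), ← exp_log (sqrt_pos.2 pi_pos), ← exp_add]
  push_cast
  exact exp_le_exp.2 hlog

theorem sqrt_pi_mul_exp_le_stirlingSeq {n : ℕ} (hn : n ≠ 0) :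
    √π * exp (1 / (12 * n + 1)) ≤ stirlingSeq n := by
  obtain ⟨j, rfl⟩ := Nat.exists_eq_succ_of_ne_zero hn
  have hlog : log √π + 1 / (12 * ((j : ℝ) + 1) + 1) ≤ log (stirlingSeq (j + 1)) := by
    refine add_le_of_tendsto_of_sub_succ_le tendsto_log_stirlingSeq_succ
      (tendsto_one_div_mul_succ_add 12 1 (by norm_num)) (fun i => ?_) j
    refine le_trans ?_ (one_div_three_mul_sq_le_log_stirlingSeq_sdiff i)
    push_cast
    rw [div_sub_div _ _ (by positivity) (by positivity),
      div_le_div_iff₀ (by positivity) (by positivity)]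
    nlinarith [(i.cast_nonneg : (0 : ℝ) ≤ i)]
  rw [← exp_log (stirlingSeq_pos hn), ← exp_log (sqrt_pos.2 pi_pos), ← exp_add]
  push_cast
  exact exp_le_exp.2 hlog

lemma choose_div_eq_sqrt_pi_mul_stirlingSeq_div {k m : ℕ} (hk : k ≠ 0) (hm : m ≠ 0) :
    ((k + m).choose k : ℝ) / (exp ((k + m : ℕ) * binEntropy (k / (k + m : ℕ))) /
        √(2 * π * (k / (k + m : ℕ)) * (1 - k / (k + m : ℕ)) * (k + m : ℕ))) =
      √π * stirlingSeq (k + m) / (stirlingSeq k * stirlingSeq m) := by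
  have hsqrt : √(2 * π * (k / (k + m : ℕ)) * (1 - k / (k + m : ℕ)) * (k + m : ℕ)) =
      √π * √(2 * k) * √(2 * m) / √(2 * (k + m : ℕ)) := by
    rw [← sqrt_mul (by positivity), ← sqrt_mul (by positivity), ← sqrt_div (by positivity)]
    congr 1
    push_cast
    field_simp
    ring
  rw [Nat.cast_choose ℝ (Nat.le_add_right k m), Nat.add_sub_cancel_left,
    factorial_eq_stirlingSeq_mul hk, factorial_eq_stirlingSeq_mul hm,
    factorial_eq_stirlingSeq_mul (by omega), hsqrt, div_pow, div_pow, div_pow]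
  push_cast
  rw [exp_mul_binEntropy_div hk hm]
  have := stirlingSeq_pos hk
  have := stirlingSeq_pos hm
  field_simp
  ring

lemma exp_le_sqrt_pi_mul_stirlingSeq_div {k m : ℕ} (hk : k ≠ 0) (hm : m ≠ 0) :
    exp (1 / (12 * (k + m : ℕ) + 1) - 1 / (12 * k) - 1 / (12 * m)) ≤
      √π * stirlingSeq (k + m) / (stirlingSeq k * stirlingSeq m) := by
  have hkm : k + m ≠ 0 := by omega
  have := stirlingSeq_pos hkm
  have := stirlingSeq_pos hk
  have := stirlingSeq_pos hm
  have := sqrt_pi_mul_exp_le_stirlingSeq hkm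
  have := stirlingSeq_le_sqrt_pi_mul_exp hk
  have := stirlingSeq_le_sqrt_pi_mul_exp hm
  calc exp (1 / (12 * (k + m : ℕ) + 1) - 1 / (12 * k) - 1 / (12 * m))
      = √π * (√π * exp (1 / (12 * (k + m : ℕ) + 1))) /
          ((√π * exp (1 / (12 * k))) * (√π * exp (1 / (12 * m)))) := by
        rw [exp_sub, exp_sub]
        field_simp
    _ ≤ √π * stirlingSeq (k + m) / (stirlingSeq k * stirlingSeq m) := by gcongr

lemma sqrt_pi_mul_stirlingSeq_div_lt_one {k m : ℕ} (hk : k ≠ 0) (hm : m ≠ 0) :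
    √π * stirlingSeq (k + m) / (stirlingSeq k * stirlingSeq m) < 1 := by
  have hsk := stirlingSeq_pos hk
  have hlt : stirlingSeq (k + m) < stirlingSeq k := by
    calc stirlingSeq (k + m) ≤ √π * exp (1 / (12 * (k + m : ℕ))) :=
          stirlingSeq_le_sqrt_pi_mul_exp (by omega)
      _ < √π * exp (1 / (12 * k + 1)) := by
          have : (1 : ℝ) ≤ m := by exact_mod_cast Nat.one_le_iff_ne_zero.2 hm
          gcongr
          push_cast
          linarith
      _ ≤ stirlingSeq k := sqrt_pi_mul_exp_le_stirlingSeq hk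
  rw [div_lt_one (mul_pos hsk (stirlingSeq_pos hm))]
  calc √π * stirlingSeq (k + m) < √π * stirlingSeq k := by gcongr
    _ ≤ stirlingSeq m * stirlingSeq k := by gcongr; exact sqrt_pi_le_stirlingSeq hm
    _ = stirlingSeq k * stirlingSeq m := mul_comm _ _

end Stirling

/-- Precise Stirling-type bounds for the central binomial coefficient:
for `p ∈ (0,1)` with `pn` an integer (`k = pn`),
`1 - (1 - p(1-p))/(12 p (1-p) n) < C(n,pn) / ( e^{nH(p)} / √(2π p (1-p) n) ) < 1`. -/
theorem binomial_stirling_bounds (n : ℕ) (hn : 1 ≤ n) (p : ℝ)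
    (hp : 0 < p) (hp1 : p < 1) (k : ℕ) (hk : (k : ℝ) = p * n) :
    1 - (1 - p * (1 - p)) / (12 * p * (1 - p) * n)
        < (n.choose k : ℝ) /
            (Real.exp ((n : ℝ) * (-p * Real.log p - (1 - p) * Real.log (1 - p)))
              / Real.sqrt (2 * π * p * (1 - p) * n))
      ∧ (n.choose k : ℝ) /
            (Real.exp ((n : ℝ) * (-p * Real.log p - (1 - p) * Real.log (1 - p)))
              / Real.sqrt (2 * π * p * (1 - p) * n))
          < 1 := by
  have hn' : (0 : ℝ) < n := by exact_mod_cast hn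
  have hk0 : k ≠ 0 := by
    have := mul_pos hp hn'
    rw [← hk] at this
    exact_mod_cast this.ne'
  have hkn : k < n := by exact_mod_cast (show (k : ℝ) < n by nlinarith)
  obtain ⟨m, rfl⟩ := Nat.exists_eq_add_of_le hkn.le
  have hm0 : m ≠ 0 := by omega
  have hp_eq : p = k / (k + m : ℕ) := by rw [hk]; field_simp
  have h1p : 1 - p = m / (k + m : ℕ) := by rw [hp_eq]; push_cast; field_simp; ring
  have hH : -p * log p - (1 - p) * log (1 - p) = binEntropy p := by
    simp only [binEntropy, log_inv]; ring
  have hlhs : 1 - (1 - p * (1 - p)) / (12 * p * (1 - p) * (k + m : ℕ)) =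
      1 + 1 / (12 * ((k : ℝ) + m)) - 1 / (12 * k) - 1 / (12 * m) := by
    have : (k : ℝ) ≠ 0 := by exact_mod_cast hk0
    have : (m : ℝ) ≠ 0 := by exact_mod_cast hm0
    rw [h1p, hp_eq]; push_cast; field_simp; ring
  rw [hH, hlhs, hp_eq, choose_div_eq_sqrt_pi_mul_stirlingSeq_div hk0 hm0]
  refine ⟨?_, sqrt_pi_mul_stirlingSeq_div_lt_one hk0 hm0⟩
  calc 1 + 1 / (12 * ((k : ℝ) + m)) - 1 / (12 * k) - 1 / (12 * m)
      < exp (1 / (12 * ((k : ℝ) + m) + 1) - 1 / (12 * k) - 1 / (12 * m)) :=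
        one_add_div_sub_div_sub_div_lt_exp (by exact_mod_cast Nat.one_le_iff_ne_zero.2 hk0)
          (by exact_mod_cast Nat.one_le_iff_ne_zero.2 hm0)
    _ ≤ _ := by exact_mod_cast exp_le_sqrt_pi_mul_stirlingSeq_div hk0 hm0
end

section
/- As n → ∞, the sum ∑_{k=0}^{3g-1} C(6g, 2k+1)/C(3g-1, k) is asymptotically equivalent to 2^{3g+1} · 3 · √(π/12) · √g; equivalently, ∑_{k=0}^{3g-1} C(6g,2k+1)/C(3g-1,k) ~ √3 · 2^{5g} · (g!)² / (2g)! as g → ∞. -/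
/-!
Put `n = 3g`. Writing `k + j = n - 1`, the term `C(2n, 2k+1) / C(n-1, k)` is
`(2n)! / (2^(n-1) (n-1)!)` times `1 / ((2k+1)‼ (2j+1)‼)`, and `n!` times the convolution
`∑_{k+j=n-1} 1 / ((2k+1)‼ (2j+1)‼)` telescopes to `∑_{m<n} m! / (2m+1)‼`, a partial sum of
Euler's series for `π / 2`. So the sum is `2n · C(2n, n) / 2^n · (π/2 + o(1))`, and Stirling's
`C(2n, n) ~ 4^n / √(πn)` turns this into `2^n √(πn)`.

Euler's series is summed through Wallis' integrals: `m! / (2m+1)‼ = ½ ∫₀^π sin x (sin² x / 2)^m`,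
so the geometric series under the integral leaves `∫₀^π sin x / (1 + cos² x) = π / 2`.
-/

open Real Filter Finset

namespace SumRatioBinomials

open Nat Asymptotics

theorem factorial_two_mul_add_one (k : ℕ) : (2 * k + 1)! = (2 * k + 1)‼ * (2 ^ k * k !) := by
  rw [factorial_eq_mul_doubleFactorial, doubleFactorial_two_mul]

theorem succ_mul_inv_doubleFactorial (k : ℕ) :
    (2 * ((k + 1 : ℕ) : ℝ) + 1) * ((2 * (k + 1) + 1)‼ : ℝ)⁻¹ = ((2 * k + 1)‼ : ℝ)⁻¹ := by
  rw [show 2 * (k + 1) + 1 = 2 * k + 1 + 2 by ring, doubleFactorial_add_two]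
  have : (0 : ℝ) < (2 * k + 1)‼ := by exact_mod_cast doubleFactorial_pos _
  push_cast
  field_simp
  ring

noncomputable def convInvOddDoubleFactorial (n : ℕ) : ℝ :=
  ∑ p ∈ antidiagonal n, ((2 * p.1 + 1)‼ : ℝ)⁻¹ * ((2 * p.2 + 1)‼ : ℝ)⁻¹

theorem sum_antidiagonal_succ_mul_convInvOddDoubleFactorial (n : ℕ) :
    ∑ p ∈ antidiagonal (n + 1),
        (2 * p.1 + 1 : ℝ) * (((2 * p.1 + 1)‼ : ℝ)⁻¹ * ((2 * p.2 + 1)‼ : ℝ)⁻¹)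
      = ((2 * (n + 1) + 1)‼ : ℝ)⁻¹ + convInvOddDoubleFactorial n := by
  rw [Nat.sum_antidiagonal_succ, convInvOddDoubleFactorial]
  congr 1
  · simp
  · exact sum_congr rfl fun p _ => by rw [← mul_assoc, succ_mul_inv_doubleFactorial]

theorem convInvOddDoubleFactorial_succ (n : ℕ) :
    (n + 2 : ℝ) * convInvOddDoubleFactorial (n + 1)
      = convInvOddDoubleFactorial n + ((2 * (n + 1) + 1)‼ : ℝ)⁻¹ := by
  set f : ℕ × ℕ → ℝ := fun p => ((2 * p.1 + 1)‼ : ℝ)⁻¹ * ((2 * p.2 + 1)‼ : ℝ)⁻¹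
  -- `2n + 4 = (2i + 1) + (2j + 1)` on the antidiagonal, and the two halves agree by symmetry.
  have hsplit : (2 * n + 4 : ℝ) * convInvOddDoubleFactorial (n + 1) =
      ∑ p ∈ antidiagonal (n + 1), (2 * p.1 + 1 : ℝ) * f p
        + ∑ p ∈ antidiagonal (n + 1), (2 * p.2 + 1 : ℝ) * f p := by
    rw [convInvOddDoubleFactorial, mul_sum, ← sum_add_distrib]
    refine sum_congr rfl fun p hp => ?_
    have : (p.1 + p.2 : ℝ) = n + 1 := by exact_mod_cast mem_antidiagonal.mp hp
    linear_combination (-(2 : ℝ) * f p) * this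
  have hswap : ∑ p ∈ antidiagonal (n + 1), (2 * p.2 + 1 : ℝ) * f p
      = ∑ p ∈ antidiagonal (n + 1), (2 * p.1 + 1 : ℝ) * f p := by
    rw [← Nat.sum_antidiagonal_swap]
    exact sum_congr rfl fun p _ => by simp only [f, Prod.fst_swap, Prod.snd_swap]; ring
  rw [hswap, sum_antidiagonal_succ_mul_convInvOddDoubleFactorial] at hsplit
  linear_combination hsplit / 2

theorem factorial_mul_convInvOddDoubleFactorial (n : ℕ) :
    ((n + 1)! : ℝ) * convInvOddDoubleFactorial n
      = ∑ m ∈ range (n + 1), (m ! : ℝ) / (2 * m + 1)‼ := by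
  induction n with
  | zero => simp [convInvOddDoubleFactorial]
  | succ n ih =>
    have hrec := convInvOddDoubleFactorial_succ n
    rw [sum_range_succ, ← ih, factorial_succ (n + 1)]
    push_cast at hrec ⊢
    linear_combination ((n + 1)! : ℝ) * hrec

theorem choose_div_choose_eq (i j : ℕ) :
    ((2 * i + 1 + (2 * j + 1)).choose (2 * i + 1) : ℝ) / ((i + j).choose i)
      = (2 * i + 1 + (2 * j + 1))! / (2 ^ (i + j) * (i + j)!)
        * (((2 * i + 1)‼ : ℝ)⁻¹ * ((2 * j + 1)‼ : ℝ)⁻¹) := by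
  have hi : (0 : ℝ) < (2 * i + 1)‼ := by exact_mod_cast doubleFactorial_pos _
  have hj : (0 : ℝ) < (2 * j + 1)‼ := by exact_mod_cast doubleFactorial_pos _
  rw [cast_add_choose, cast_add_choose, factorial_two_mul_add_one i, factorial_two_mul_add_one j]
  push_cast
  field_simp
  ring

theorem sum_range_choose_div_choose_eq (m : ℕ) :
    ∑ k ∈ range (m + 1), ((2 * (m + 1)).choose (2 * k + 1) : ℝ) / (m.choose k)
      = (2 * (m + 1))! / (2 ^ m * m !) * convInvOddDoubleFactorial m := by
  rw [convInvOddDoubleFactorial, Nat.sum_antidiagonal_eq_sum_range_succ_mk, mul_sum]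
  refine sum_congr rfl fun k hk => ?_
  obtain ⟨j, rfl⟩ : ∃ j, m = k + j := ⟨m - k, by grind⟩
  rw [Nat.add_sub_cancel_left, show 2 * (k + j + 1) = 2 * k + 1 + (2 * j + 1) by ring,
    choose_div_choose_eq]

theorem cast_centralBinom (n : ℕ) : (centralBinom n : ℝ) = (2 * n)! / (n ! * n !) := by
  rw [centralBinom_eq_two_mul_choose, two_mul, cast_add_choose]

theorem sum_range_choose_div_choose_eq_centralBinom (n : ℕ) :
    ∑ k ∈ range n, ((2 * n).choose (2 * k + 1) : ℝ) / ((n - 1).choose k)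
      = 2 * n * centralBinom n / 2 ^ n * ∑ m ∈ range n, (m ! : ℝ) / (2 * m + 1)‼ := by
  rcases n with _ | m
  · simp
  rw [Nat.add_sub_cancel, sum_range_choose_div_choose_eq,
    ← factorial_mul_convInvOddDoubleFactorial, cast_centralBinom, factorial_succ]
  have : (0 : ℝ) < m ! := by exact_mod_cast factorial_pos m
  push_cast
  field_simp
  ring

theorem factorial_div_doubleFactorial_eq_prod (m : ℕ) :
    (m ! : ℝ) / (2 * m + 1)‼ = ∏ i ∈ range m, ((i : ℝ) + 1) / (2 * i + 3) := by
  induction m with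
  | zero => simp
  | succ m ih =>
    have : (0 : ℝ) < (2 * m + 1)‼ := by exact_mod_cast doubleFactorial_pos _
    rw [prod_range_succ, ← ih, factorial_succ, show 2 * (m + 1) + 1 = 2 * m + 1 + 2 by ring,
      doubleFactorial_add_two]
    push_cast
    field_simp
    ring

theorem factorial_div_doubleFactorial_eq_integral (m : ℕ) :
    (m ! : ℝ) / (2 * m + 1)‼ = ∫ x in 0..π, sin x * (sin x ^ 2 / 2) ^ m / 2 := by
  have hpow : ∀ x, sin x * (sin x ^ 2 / 2) ^ m / 2 = (2 ^ (m + 1) : ℝ)⁻¹ * sin x ^ (2 * m + 1) :=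
    fun x => by rw [pow_succ _ (2 * m), pow_mul, div_pow, pow_succ (2 : ℝ) m]; field_simp
  have hprod : ∏ i ∈ range m, (2 * (i : ℝ) + 2) / (2 * i + 3)
      = 2 ^ m * ∏ i ∈ range m, ((i : ℝ) + 1) / (2 * i + 3) := by
    rw [← card_range m, ← prod_const, card_range, ← prod_mul_distrib]
    exact prod_congr rfl fun i _ => by ring
  simp_rw [hpow]
  rw [intervalIntegral.integral_const_mul, integral_sin_pow_odd, hprod,
    factorial_div_doubleFactorial_eq_prod, pow_succ]
  generalize ∏ i ∈ range m, ((i : ℝ) + 1) / (2 * i + 3) = P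
  field_simp

theorem integral_sin_div_one_add_cos_sq : ∫ x in 0..π, sin x / (1 + cos x ^ 2) = π / 2 := by
  have hderiv : ∀ x ∈ Set.uIcc 0 π,
      HasDerivAt (fun x => -arctan (cos x)) (sin x / (1 + cos x ^ 2)) x := fun x _ => by
    refine ((hasDerivAt_cos x).arctan).neg.congr_deriv ?_
    field_simp
  have hcont : Continuous fun x => sin x / (1 + cos x ^ 2) :=
    by fun_prop (disch := intro x; positivity)
  rw [intervalIntegral.integral_eq_sub_of_hasDerivAt hderiv (hcont.intervalIntegrable _ _)]
  simp only [cos_pi, cos_zero, arctan_neg, arctan_one]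
  ring

theorem hasSum_factorial_div_doubleFactorial :
    HasSum (fun m => (m ! : ℝ) / (2 * m + 1)‼) (π / 2) := by
  simp_rw [factorial_div_doubleFactorial_eq_integral, ← integral_sin_div_one_add_cos_sq]
  have hratio : ∀ x, 0 ≤ sin x ^ 2 / 2 ∧ sin x ^ 2 / 2 ≤ 1 / 2 := fun x =>
    ⟨by positivity, by linarith [sin_sq_le_one x]⟩
  refine intervalIntegral.hasSum_integral_of_dominated_convergence (fun m _ => (1 / 2 : ℝ) ^ m)
    (fun m => (by fun_prop : Continuous _).aestronglyMeasurable) (fun m => ?_)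
    (MeasureTheory.ae_of_all _ fun x _ => summable_geometric_of_lt_one (by norm_num) (by norm_num))
    intervalIntegrable_const (MeasureTheory.ae_of_all _ fun x _ => ?_)
  · refine MeasureTheory.ae_of_all _ fun x _ => ?_
    obtain ⟨h0, h1⟩ := hratio x
    calc ‖sin x * (sin x ^ 2 / 2) ^ m / 2‖ = |sin x| * (sin x ^ 2 / 2) ^ m / 2 := by
          rw [norm_div, norm_mul, norm_pow, norm_of_nonneg h0, Real.norm_eq_abs]; norm_num
      _ ≤ 1 * (1 / 2) ^ m / 2 := by gcongr; exact abs_sin_le_one x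
      _ ≤ (1 / 2) ^ m := by linarith [pow_nonneg (by norm_num : (0 : ℝ) ≤ 1 / 2) m]
  · obtain ⟨h0, h1⟩ := hratio x
    have hden : 1 + cos x ^ 2 = 2 * (1 - sin x ^ 2 / 2) := by linarith [sin_sq_add_cos_sq x]
    have hsum : sin x * (1 - sin x ^ 2 / 2)⁻¹ / 2 = sin x / (1 + cos x ^ 2) := by
      rw [hden]; field_simp
    rw [← hsum]
    exact ((hasSum_geometric_of_lt_one h0 (by linarith)).mul_left (sin x)).div_const 2

theorem centralBinom_isEquivalent :
    (fun n : ℕ => (centralBinom n : ℝ)) ~[atTop] fun n => 4 ^ n / √(π * n) := by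
  have hstirling := Stirling.factorial_isEquivalent_stirling
  refine ((hstirling.comp_tendsto (tendsto_id.const_mul_atTop' two_pos)).div
    (hstirling.mul hstirling) |>.congr_left (Eventually.of_forall fun n => ?_)).congr_right ?_
  · simp [cast_centralBinom]
  filter_upwards [eventually_gt_atTop 0] with n hn
  have hs : 0 < √(π * n) := by positivity
  have hx : 0 < ((n : ℝ) / rexp 1) ^ n := by positivity
  have h4 : √(2 * ((2 * n : ℕ) : ℝ) * π) = 2 * √(π * n) := by
    rw [show 2 * ((2 * n : ℕ) : ℝ) * π = 2 ^ 2 * (π * n) by push_cast; ring,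
      sqrt_mul (by norm_num), sqrt_sq (by norm_num)]
  have h2 : √(2 * n * π) * √(2 * n * π) = 2 * √(π * n) ^ 2 := by
    rw [mul_self_sqrt (by positivity), sq_sqrt (by positivity)]; ring
  have h3 : (((2 * n : ℕ) : ℝ) / rexp 1) ^ (2 * n) = 4 ^ n * ((n / rexp 1) ^ n) ^ 2 := by
    push_cast; rw [mul_div_assoc, mul_pow, pow_mul, pow_mul']; norm_num
  simp only [Function.comp, id, Pi.div_apply, Pi.mul_apply]
  rw [h4, h3, mul_mul_mul_comm (√(2 * n * π)), h2]
  field_simp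

theorem sum_range_choose_div_choose_isEquivalent :
    (fun n : ℕ => ∑ k ∈ range n, ((2 * n).choose (2 * k + 1) : ℝ) / ((n - 1).choose k))
      ~[atTop] fun n => 2 ^ n * √(π * n) := by
  simp_rw [sum_range_choose_div_choose_eq_centralBinom]
  have hsum := (isEquivalent_const_iff_tendsto (by positivity : π / 2 ≠ 0)).mpr
    hasSum_factorial_div_doubleFactorial.tendsto_sum_nat
  refine ((((IsEquivalent.refl (u := fun n : ℕ => 2 * (n : ℝ))).mul
    centralBinom_isEquivalent).div IsEquivalent.refl).mul hsum).congr_right ?_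
  filter_upwards [eventually_gt_atTop 0] with n hn
  have hs : 0 < √(π * n) := by positivity
  simp only [Pi.mul_apply, Pi.div_apply, Function.const_apply]
  rw [show (4 : ℝ) ^ n = 2 ^ n * 2 ^ n by rw [← mul_pow]; norm_num]
  field_simp
  rw [sq_sqrt (by positivity)]

theorem sum_range_three_mul_isEquivalent :
    (fun g : ℕ => ∑ k ∈ range (3 * g), ((6 * g).choose (2 * k + 1) : ℝ) / ((3 * g - 1).choose k))
      ~[atTop] fun g => 2 ^ (3 * g) * √(π * ↑(3 * g)) := by
  simpa only [Function.comp_def, id, ← mul_assoc, Nat.reduceMul] using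
    sum_range_choose_div_choose_isEquivalent.comp_tendsto (tendsto_id.const_mul_atTop' three_pos)

theorem sqrt_pi_mul_three_mul (g : ℕ) : √(π * ↑(3 * g)) = 2 * 3 * √(π / 12) * √g := by
  rw [show π * ((3 * g : ℕ) : ℝ) = 6 ^ 2 * (π / 12) * g by push_cast; ring,
    sqrt_mul (by positivity), sqrt_mul (by positivity), sqrt_sq (by norm_num)]
  ring

theorem sqrt_three_mul_factorial_sq_div_isEquivalent :
    (fun g : ℕ => √3 * 2 ^ (5 * g) * (g ! : ℝ) ^ 2 / (2 * g)!)
      ~[atTop] fun g => 2 ^ (3 * g) * √(π * ↑(3 * g)) := by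
  refine ((IsEquivalent.refl (u := fun g : ℕ => √3 * (2 : ℝ) ^ (5 * g))).div
    centralBinom_isEquivalent |>.congr_left (Eventually.of_forall fun g => ?_)).congr_right ?_
  · simp only [Pi.div_apply, cast_centralBinom]
    field_simp
  filter_upwards [eventually_gt_atTop 0] with g hg
  rw [Pi.div_apply, show π * ((3 * g : ℕ) : ℝ) = 3 * (π * g) by push_cast; ring,
    sqrt_mul (by norm_num : (0 : ℝ) ≤ 3), show 5 * g = 3 * g + 2 * g by ring, pow_add,
    pow_mul (2 : ℝ) 2 g]
  have : 0 < √(π * g) := by positivity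
  field_simp
  norm_num

end SumRatioBinomials

open SumRatioBinomials Asymptotics in
/-- `∑_{k=0}^{3g-1} C(6g,2k+1)/C(3g-1,k) ~ 2^{3g+1}·3·√(π/12)·√g`, equivalently
`~ √3 · 2^{5g} · (g!)² / (2g)!`, as `g → ∞`. -/
theorem sum_ratio_binomials_asymptotics :
    Filter.Tendsto (fun g : ℕ =>
        (∑ k ∈ Finset.range (3 * g), (((6 * g).choose (2 * k + 1) : ℝ) /
            ((3 * g - 1).choose k))) /
          ((2 : ℝ) ^ (3 * g + 1) * 3 * Real.sqrt (π / 12) * Real.sqrt g))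
      Filter.atTop (nhds 1)
    ∧ Filter.Tendsto (fun g : ℕ =>
        (∑ k ∈ Finset.range (3 * g), (((6 * g).choose (2 * k + 1) : ℝ) /
            ((3 * g - 1).choose k))) /
          (Real.sqrt 3 * (2 : ℝ) ^ (5 * g) * ((g.factorial : ℝ)) ^ 2 /
            ((2 * g).factorial : ℝ)))
      Filter.atTop (nhds 1) := by
  have hsum := sum_range_three_mul_isEquivalent
  constructor
  · refine (isEquivalent_iff_tendsto_one ?_).mp (hsum.congr_right (Eventually.of_forall fun g => by
      simp only [sqrt_pi_mul_three_mul, pow_succ]; ring))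
    filter_upwards [eventually_gt_atTop 0] with g hg
    positivity
  · exact (isEquivalent_iff_tendsto_one (Eventually.of_forall fun g => by positivity)).mp
      (hsum.trans sqrt_three_mul_factorial_sq_div_isEquivalent.symm)
end
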